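/- arXiv:math/0503187 — 6 statements merged into one kernel-verified Lean document; each statement's English description precedes it below -/
import Mathlib

section
/- A disconnected graph on n vertices (n ≥ 4) with no isolated vertex has at most binomial(n-2, 2) + 1 edges. -/
lemma two_mul_choose_two (m : ℕ) : 2 * m.choose 2 = m * (m - 1) := by
  rw [Nat.choose_two_right, Nat.mul_div_cancel']
  rcases Nat.even_or_odd m with h | h
  · exact Dvd.dvd.mul_right h.two_dvd _
  · exact Dvd.dvd.mul_left (Nat.Odd.sub_odd h odd_one).two_dvd _

lemma choose_ineq (a b : ℕ) (ha : 2 ≤ a) (hb : 2 ≤ b) :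
    a.choose 2 + b.choose 2 ≤ (a + b - 2).choose 2 + 1 := by
  obtain ⟨a', rfl⟩ : ∃ a', a = a' + 2 := ⟨a - 2, by omega⟩
  obtain ⟨b', rfl⟩ : ∃ b', b = b' + 2 := ⟨b - 2, by omega⟩
  have hab : a' + 2 + (b' + 2) - 2 = a' + b' + 2 := by omega
  rw [hab]
  have h1 : 2 * (a' + 2).choose 2 = (a' + 2) * (a' + 1) := by
    rw [two_mul_choose_two]; congr 1
  have h2 : 2 * (b' + 2).choose 2 = (b' + 2) * (b' + 1) := by
    rw [two_mul_choose_two]; congr 1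
  have h3 : 2 * (a' + b' + 2).choose 2 = (a' + b' + 2) * (a' + b' + 1) := by
    rw [two_mul_choose_two]; congr 1
  nlinarith [Nat.zero_le (a' * b')]

/-- A disconnected graph on `n` vertices (`n ≥ 4`) with no isolated vertex has at most
`(n-2).choose 2 + 1` edges. -/
theorem disconnected_graph_no_isolated_edge_bound (n : ℕ) (hn : 4 ≤ n)
    (E : Finset (Finset (Fin n))) (hcard : ∀ e ∈ E, e.card = 2)
    (hiso : ∀ v : Fin n, ∃ e ∈ E, v ∈ e)
    (hdisc : ∃ A : Finset (Fin n), A.Nonempty ∧ Aᶜ.Nonempty ∧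
      ∀ e ∈ E, e ⊆ A ∨ e ⊆ Aᶜ) :
    E.card ≤ (n - 2).choose 2 + 1 := by
  obtain ⟨A, hA, hA', hsplit⟩ := hdisc
  have hsub : E ⊆ A.powersetCard 2 ∪ Aᶜ.powersetCard 2 := by
    intro e he
    rcases hsplit e he with h | h
    · exact Finset.mem_union_left _ (Finset.mem_powersetCard.2 ⟨h, hcard e he⟩)
    · exact Finset.mem_union_right _ (Finset.mem_powersetCard.2 ⟨h, hcard e he⟩)
  have hle : E.card ≤ A.card.choose 2 + Aᶜ.card.choose 2 := by
    calc E.card ≤ (A.powersetCard 2 ∪ Aᶜ.powersetCard 2).card := Finset.card_le_card hsub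
    _ ≤ (A.powersetCard 2).card + (Aᶜ.powersetCard 2).card := Finset.card_union_le _ _
    _ = A.card.choose 2 + Aᶜ.card.choose 2 := by rw [Finset.card_powersetCard, Finset.card_powersetCard]
  have hA2 : 2 ≤ A.card := by
    obtain ⟨v, hv⟩ := hA
    obtain ⟨e, he, hve⟩ := hiso v
    rcases hsplit e he with h | h
    · calc 2 = e.card := (hcard e he).symm
      _ ≤ A.card := Finset.card_le_card h
    · exact absurd (h hve) (by simp [hv])
  have hAc2 : 2 ≤ Aᶜ.card := by
    obtain ⟨v, hv⟩ := hA'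
    obtain ⟨e, he, hve⟩ := hiso v
    rcases hsplit e he with h | h
    · exact absurd (h hve) (fun hvA => (Finset.mem_compl.1 hv) hvA)
    · calc 2 = e.card := (hcard e he).symm
      _ ≤ Aᶜ.card := Finset.card_le_card h
  have hsum : A.card + Aᶜ.card = n := by
    rw [Finset.card_add_card_compl]; simp
  calc E.card ≤ A.card.choose 2 + Aᶜ.card.choose 2 := hle
  _ ≤ (A.card + Aᶜ.card - 2).choose 2 + 1 := choose_ineq _ _ hA2 hAc2
  _ = (n - 2).choose 2 + 1 := by rw [hsum]
end

section
/- Let Δ be a simplicial complex on [n] of dimension d-1 with d ≥ 2 and c = n - d. If the number of d-element faces of Δ is at least binomial(n,d) - c, then every (d-1)-element subset of [n] is a face of Δ. -/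
/-- A simplicial complex on `Fin n`: a family of finite subsets closed under subsets. -/
def IsComplexF {n : ℕ} (Δ : Finset (Finset (Fin n))) : Prop :=
  ∀ F ∈ Δ, ∀ G : Finset (Fin n), G ⊆ F → G ∈ Δ

/-- Let `Δ` be a simplicial complex on `[n]` of dimension `d-1` with `d ≥ 2` and
`c = n - d`.  If the number of `d`-element faces of `Δ` is at least
`choose n d - c`, then every `(d-1)`-element subset of `[n]` is a face of `Δ`. -/
theorem large_multiplicity_indeg (n d : ℕ) (hd : 2 ≤ d) (hdn : d ≤ n)
    (Δ : Finset (Finset (Fin n))) (hΔ : IsComplexF Δ)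
    (hdim : ∀ F ∈ Δ, F.card ≤ d) (hpure : ∃ F ∈ Δ, F.card = d)
    (he : n.choose d - (n - d) ≤ (Δ.filter fun F => F.card = d).card) :
    ∀ G : Finset (Fin n), G.card = d - 1 → G ∈ Δ := by
  intro G hG1
  set Dfaces := Δ.filter (fun F => F.card = d) with hDf
  have hsub : Dfaces ⊆ Finset.univ.powersetCard d := by
    intro F hF
    rw [Finset.mem_powersetCard_univ]
    exact (Finset.mem_filter.mp hF).2
  have hScard : ((Finset.univ.powersetCard d) \ Dfaces).card ≤ n - d := by
    rw [Finset.card_sdiff_of_subset hsub, Finset.card_powersetCard, Finset.card_univ,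
      Fintype.card_fin]
    omega
  set T := Gᶜ.image (fun x => insert x G) with hT
  have hTcard : T.card = n - d + 1 := by
    rw [Finset.card_image_of_injOn, Finset.card_compl, Fintype.card_fin, hG1]
    · omega
    · intro a ha b hb hab
      have ha' : a ∉ G := by simpa using ha
      have hab' : insert a G = insert b G := hab
      have : a ∈ insert b G := hab' ▸ Finset.mem_insert_self a G
      rcases Finset.mem_insert.mp this with h | h
      · exact h
      · exact absurd h ha'
  have hTsub : T ⊆ Finset.univ.powersetCard d := by
    intro F hF
    rw [Finset.mem_powersetCard_univ]
    obtain ⟨x, hx, rfl⟩ := Finset.mem_image.mp hF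
    rw [Finset.card_insert_of_notMem (by simpa using hx), hG1]
    omega
  by_contra hGn
  have hall : T ⊆ (Finset.univ.powersetCard d) \ Dfaces := by
    intro F hF
    rw [Finset.mem_sdiff]
    refine ⟨hTsub hF, ?_⟩
    intro hFD
    have hFΔ := (Finset.mem_filter.mp hFD).1
    obtain ⟨x, hx, rfl⟩ := Finset.mem_image.mp hF
    exact hGn (hΔ _ hFΔ G (Finset.subset_insert x G))
  have := Finset.card_le_card hall
  omega
end

section
/- Let Δ be a pure simplicial complex of dimension d-1 (d ≥ 3) such that every face of cardinality at most d-1 which is not a facet is contained in at least two facets. If some d-element subset {i_1,...,i_d} of [n] is a minimal non-face of Δ (i.e., it is not a face but all its proper subsets are faces), then Δ has at least 2d facets. -/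
/-- A facet (maximal face) of a simplicial complex. -/
def IsFacet {n : ℕ} (Δ : Finset (Finset (Fin n))) (F : Finset (Fin n)) : Prop :=
  F ∈ Δ ∧ ∀ G ∈ Δ, F ⊆ G → G = F

open Classical in
/-- Let `Δ` be a pure `(d-1)`-dimensional simplicial complex (`d ≥ 3`) in which every
face of cardinality at most `d-1` that is not a facet is contained in at least two
facets.  If some `d`-element subset of `[n]` is a minimal non-face of `Δ`, then `Δ`
has at least `2d` facets. -/
theorem min_nonface_two_d_facets (n d : ℕ) (hd : 3 ≤ d)
    (Δ : Finset (Finset (Fin n))) (hΔ : IsComplexF Δ)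
    (hpure : ∀ F : Finset (Fin n), IsFacet Δ F → F.card = d)
    (hfree : ∀ G ∈ Δ, G.card ≤ d - 1 → ¬ IsFacet Δ G →
      2 ≤ (Δ.filter fun F => IsFacet Δ F ∧ G ⊆ F).card)
    (hmin : ∃ M : Finset (Fin n), M.card = d ∧ M ∉ Δ ∧ ∀ G ⊂ M, G ∈ Δ) :
    2 * d ≤ (Δ.filter fun F => IsFacet Δ F).card := by
  classical
  obtain ⟨M, hMcard, hMnot, hMsub⟩ := hmin
  set S : Fin n → Finset (Finset (Fin n)) :=
    fun i => Δ.filter fun F => IsFacet Δ F ∧ M.erase i ⊆ F with hS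
  have hface : ∀ i ∈ M, M.erase i ∈ Δ := fun i hi =>
    hMsub _ (Finset.erase_ssubset hi)
  have hcardE : ∀ i ∈ M, (M.erase i).card = d - 1 := by
    intro i hi; rw [Finset.card_erase_of_mem hi, hMcard]
  have hnotfacet : ∀ i ∈ M, ¬ IsFacet Δ (M.erase i) := by
    intro i hi hfac
    have := hpure _ hfac
    rw [hcardE i hi] at this
    omega
  have htwo : ∀ i ∈ M, 2 ≤ (S i).card := by
    intro i hi
    exact hfree _ (hface i hi) (le_of_eq (hcardE i hi)) (hnotfacet i hi)
  have hdisj : ∀ i ∈ M, ∀ j ∈ M, i ≠ j → Disjoint (S i) (S j) := by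
    intro i hi j hj hij
    rw [Finset.disjoint_left]
    intro F hFi hFj
    simp only [hS, Finset.mem_filter] at hFi hFj
    have hMF : M ⊆ F := by
      intro x hx
      by_cases hxi : x = i
      · subst hxi
        exact hFj.2.2 (Finset.mem_erase.mpr ⟨hij, hx⟩)
      · exact hFi.2.2 (Finset.mem_erase.mpr ⟨hxi, hx⟩)
    exact hMnot (hΔ F hFi.1 M hMF)
  have hbu : (M.biUnion S) ⊆ Δ.filter fun F => IsFacet Δ F := by
    intro F hF
    obtain ⟨i, hi, hFi⟩ := Finset.mem_biUnion.mp hF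
    simp only [hS, Finset.mem_filter] at hFi ⊢
    exact ⟨hFi.1, hFi.2.1⟩
  calc 2 * d = ∑ _i ∈ M, 2 := by
        rw [Finset.sum_const, hMcard, smul_eq_mul, mul_comm]
    _ ≤ ∑ i ∈ M, (S i).card := Finset.sum_le_sum htwo
    _ = (M.biUnion S).card := (Finset.card_biUnion hdisj).symm
    _ ≤ _ := Finset.card_le_card hbu
end

section
/- Let Δ be a simplicial complex of dimension d-1 with d ≥ 2 whose every minimal non-face has cardinality at most d (relation type ≤ d). If the number of (d-1)-dimensional facets of Δ is at most 2d-1, then the reduced homology H̃_{d-1}(Δ; k) vanishes for any field k. -/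
open Finset

/-- An (abstract) simplicial complex on the vertex set `Fin n`:
a family of finite subsets closed under taking subsets. -/
def IsComplex {n : ℕ} (Δ : Set (Finset (Fin n))) : Prop :=
  ∀ F ∈ Δ, ∀ G : Finset (Fin n), G ⊆ F → G ∈ Δ

/-- The simplicial boundary operator on chains (functions on the finite subsets of
`Fin n`) with coefficients in `k`: on the basis element corresponding to a set `F`
it is the alternating sum of the basis elements corresponding to the subsets of `F`
with one point removed. -/
noncomputable def bdry (n : ℕ) (k : Type) [Field k] :
    (Finset (Fin n) → k) →ₗ[k] (Finset (Fin n) → k) :=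
  LinearMap.pi fun G =>
    ∑ a ∈ Gᶜ, ((-1 : k) ^ (G.filter (fun b => b < a)).card) • LinearMap.proj (insert a G)

/-- The subspace of chains supported on the faces of `Δ` of cardinality `m`. -/
noncomputable def spanFaces (n : ℕ) (k : Type) [Field k] (Δ : Set (Finset (Fin n))) (m : ℕ) :
    Submodule k (Finset (Fin n) → k) :=
  Submodule.span k {x | ∃ F ∈ Δ, F.card = m ∧ x = Pi.single F (1 : k)}

/-- Reduced simplicial `i`-cycles of `Δ` over `k` (chains on `(i+1)`-element faces
killed by the boundary operator; in degree `0` the boundary operator is the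
augmentation, so degree-`0` cycles are the *reduced* ones). -/
noncomputable def cycles (n : ℕ) (k : Type) [Field k] (Δ : Set (Finset (Fin n))) (i : ℕ) :
    Submodule k (Finset (Fin n) → k) :=
  spanFaces n k Δ (i + 1) ⊓ LinearMap.ker (bdry n k)

/-- Simplicial `i`-boundaries of `Δ` over `k`. -/
noncomputable def boundaries (n : ℕ) (k : Type) [Field k] (Δ : Set (Finset (Fin n))) (i : ℕ) :
    Submodule k (Finset (Fin n) → k) :=
  Submodule.map (bdry n k) (spanFaces n k Δ (i + 2))

/-- Vanishing of the `i`-th reduced simplicial homology `H̃ᵢ(Δ; k)`: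
every `i`-cycle is a boundary. -/
def HVanishes (n : ℕ) (k : Type) [Field k] (Δ : Set (Finset (Fin n))) (i : ℕ) : Prop :=
  cycles n k Δ i ≤ boundaries n k Δ i

/-- The `i`-th reduced simplicial homology module `H̃ᵢ(Δ; k)`: cycles modulo boundaries. -/
noncomputable abbrev RHomology (n : ℕ) (k : Type) [Field k] (Δ : Set (Finset (Fin n))) (i : ℕ) :=
  (cycles n k Δ i) ⧸ ((boundaries n k Δ i).comap (cycles n k Δ i).subtype)

/-!
A nonzero `(d-1)`-cycle `z` is supported on a family `Γ` of `d`-faces, `|Γ| ≤ 2d - 1`. Since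
`∂z = 0`, every ridge `F - v` of a member `F` of `Γ` lies in a second member `F - v + a`. Since no
`(d+1)`-set is a minimal non-face, for `F ∈ Γ` and `y ∉ F` the exchanges `F - v + y` (`v ∈ F`) are
not all in `Γ`. Fix `F ∈ Γ` and `y` with `F - v₀ + y ∈ Γ`, and let `X = {v ∈ F | F - v + y ∈ Γ}`,
so `∅ ≠ X ≠ F`. As `H` ranges over `Γ`, `F \ H` takes the value `∅`, every singleton `{v} ⊆ F`,
and every pair `{v, w}` with `v ∈ X`, `w ∈ F \ X`; hence `|Γ| ≥ 1 + d + |X| (d - |X|) ≥ 2d`.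
-/

section Exchange

variable {α : Type*} [DecidableEq α] {Γ : Finset (Finset α)} {F : Finset α} {a b v w : α}

lemma sdiff_insert_erase_of_notMem (hv : v ∈ F) (ha : a ∉ F) :
    F \ insert a (F.erase v) = {v} := by
  ext u
  by_cases u = a <;> by_cases u = v <;> simp_all

lemma sdiff_insert_erase_insert_erase (hv : v ∈ F) (hw : w ∈ F) (ha : a ∉ F) (hb : b ∉ F) :
    F \ insert b ((insert a (F.erase v)).erase w) = {v, w} := by
  ext u
  by_cases u = a <;> by_cases u = b <;> by_cases u = v <;> by_cases u = w <;> simp_all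

/-- The ridge of `F - v + y` opposite `w` lies in some `H = F - v + y - w + b ∈ Γ`, and
`b ∉ F` because `b = v` would make `H = F - w + y`. -/
lemma exists_mem_sdiff_eq_pair
    (hridge : ∀ G ∈ Γ, ∀ v ∈ G, ∃ a ∉ G, insert a (G.erase v) ∈ Γ) {y : α} (hy : y ∉ F)
    (hv : v ∈ F) (hvΓ : insert y (F.erase v) ∈ Γ) (hw : w ∈ F) (hwΓ : insert y (F.erase w) ∉ Γ) :
    ∃ H ∈ Γ, F \ H = {v, w} := by
  have hvw : v ≠ w := by rintro rfl; exact hwΓ hvΓ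
  have hwG : w ∈ insert y (F.erase v) := by simp [hw, hvw.symm]
  obtain ⟨b, hbG, hbΓ⟩ := hridge _ hvΓ w hwG
  refine ⟨_, hbΓ, sdiff_insert_erase_insert_erase hv hw hy fun hbF => hwΓ ?_⟩
  have hbv : b = v := by
    by_contra hbv
    exact hbG (mem_insert_of_mem (mem_erase.mpr ⟨hbv, hbF⟩))
  convert hbΓ using 1
  ext u
  by_cases u = v <;> by_cases u = w <;> by_cases u = y <;> simp_all

theorem two_mul_card_le_card
    (hridge : ∀ G ∈ Γ, ∀ v ∈ G, ∃ a ∉ G, insert a (G.erase v) ∈ Γ)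
    (hcone : ∀ G ∈ Γ, ∀ y ∉ G, ∃ v ∈ G, insert y (G.erase v) ∉ Γ) (hF : F ∈ Γ) :
    2 * F.card ≤ Γ.card := by
  rcases F.eq_empty_or_nonempty with rfl | ⟨v₀, hv₀⟩
  · simp
  obtain ⟨y, hy, hy₀⟩ := hridge F hF v₀ hv₀
  set X := F.filter fun v => insert y (F.erase v) ∈ Γ
  have hXF : X ⊂ F := by
    refine ⟨filter_subset _ _, fun hFX => ?_⟩
    obtain ⟨v, hv, hvΓ⟩ := hcone F hF y hy
    exact hvΓ (mem_filter.mp (hFX hv)).2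
  have hX : 0 < X.card := card_pos.mpr ⟨v₀, mem_filter.mpr ⟨hv₀, hy₀⟩⟩
  have hXlt : X.card < F.card := card_lt_card hXF
  set pairs := (X ×ˢ (F \ X)).image fun p => ({p.1, p.2} : Finset α)
  have hpairs : pairs.card = X.card * (F.card - X.card) := by
    rw [card_image_of_injOn, card_product, card_sdiff_of_subset hXF.1]
    rintro ⟨v, w⟩ hp ⟨v', w'⟩ hp' h
    simp only [coe_product, Set.mem_prod, mem_coe, mem_sdiff] at hp hp'
    dsimp only at h
    have hv : v ∈ ({v', w'} : Finset α) := h ▸ mem_insert_self v {w}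
    have hw : w ∈ ({v', w'} : Finset α) := h ▸ by simp
    simp only [mem_insert, mem_singleton] at hv hw
    obtain rfl | rfl := hv <;> obtain rfl | rfl := hw <;> simp_all
  have hdisj : Disjoint (F.powersetCard 1) pairs := by
    rw [disjoint_left]
    intro s hs hs'
    obtain ⟨⟨v, w⟩, hp, rfl⟩ := mem_image.mp hs'
    simp only [mem_product, mem_sdiff] at hp
    have hvw : v ≠ w := fun h => hp.2.2 (h ▸ hp.1)
    simp [mem_powersetCard, card_pair hvw] at hs
  have hempty : ∅ ∉ F.powersetCard 1 ∪ pairs := by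
    simp [pairs, mem_powersetCard]
  have hsub : insert ∅ (F.powersetCard 1 ∪ pairs) ⊆ Γ.image (F \ ·) := by
    intro s hs
    rw [mem_image]
    simp only [mem_insert, mem_union, mem_powersetCard, card_eq_one] at hs
    obtain rfl | ⟨hvF, v, rfl⟩ | hs := hs
    · exact ⟨F, hF, by simp⟩
    · have hv : v ∈ F := singleton_subset_iff.mp hvF
      obtain ⟨a, ha, haΓ⟩ := hridge F hF v hv
      exact ⟨_, haΓ, sdiff_insert_erase_of_notMem hv ha⟩
    · obtain ⟨⟨v, w⟩, hp, rfl⟩ := mem_image.mp hs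
      simp only [mem_product, mem_sdiff, mem_filter, X] at hp
      exact exists_mem_sdiff_eq_pair hridge hy hp.1.1 hp.1.2 hp.2.1 (by tauto)
  calc 2 * F.card ≤ 1 + F.card + X.card * (F.card - X.card) := by
        obtain ⟨m, hm⟩ : ∃ m, F.card = X.card + m := ⟨_, (Nat.add_sub_cancel' hXlt.le).symm⟩
        have hm₁ : 1 ≤ m := by omega
        rw [hm, Nat.add_sub_cancel_left]
        nlinarith
    _ = (insert ∅ (F.powersetCard 1 ∪ pairs)).card := by
        rw [card_insert_of_notMem hempty, card_union_of_disjoint hdisj, card_powersetCard,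
          Nat.choose_one_right, hpairs]
        ring
    _ ≤ (Γ.image (F \ ·)).card := card_le_card hsub
    _ ≤ Γ.card := card_image_le

end Exchange

section Chains

variable {n : ℕ} {k : Type} [Field k]

lemma bdry_apply (x : Finset (Fin n) → k) (G : Finset (Fin n)) :
    bdry n k x G = ∑ a ∈ Gᶜ, (-1 : k) ^ (G.filter (· < a)).card * x (insert a G) := by
  simp [bdry, LinearMap.pi_apply, LinearMap.sum_apply, smul_eq_mul]

lemma support_subset_of_mem_spanFaces {Δ : Set (Finset (Fin n))} {m : ℕ}
    {x : Finset (Fin n) → k} (hx : x ∈ spanFaces n k Δ m) :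
    Function.support x ⊆ {F | F ∈ Δ ∧ F.card = m} := by
  have hle : spanFaces n k Δ m ≤ Submodule.pi {F | F ∈ Δ ∧ F.card = m}ᶜ fun _ => ⊥ := by
    rw [spanFaces, Submodule.span_le]
    rintro _ ⟨G, hG, hGm, rfl⟩ F hF
    exact Pi.single_eq_of_ne (by rintro rfl; exact hF ⟨hG, hGm⟩) 1
  intro F hF
  by_contra hF'
  exact hF (hle hx F hF')

/-- The coefficient of `F - v` in `∂x` is `± x F` plus the coefficients of the other faces
through `F - v`. -/
lemma exists_insert_erase_ne_zero_of_bdry_eq_zero {x : Finset (Fin n) → k}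
    (hx : bdry n k x = 0) {F : Finset (Fin n)} {v : Fin n} (hF : x F ≠ 0) (hv : v ∈ F) :
    ∃ a ∉ F, x (insert a (F.erase v)) ≠ 0 := by
  by_contra! hzero
  have hcoeff := bdry_apply x (F.erase v)
  rw [hx, sum_eq_single_of_mem v (by simp), insert_erase hv] at hcoeff
  · exact mul_ne_zero (pow_ne_zero _ (neg_ne_zero.mpr one_ne_zero)) hF hcoeff.symm
  · intro a ha hav
    rw [hzero a (fun haF => mem_compl.mp ha (mem_erase.mpr ⟨hav, haF⟩)), mul_zero]

end Chains

section Complexes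

variable {n d : ℕ} {Δ : Finset (Finset (Fin n))}

lemma IsComplex.mem_of_ssubset {s t : Finset (Fin n)} (hΔ : IsComplex (↑Δ : Set (Finset (Fin n))))
    (hs : ∀ z ∈ s, s.erase z ∈ Δ) (hts : t ⊂ s) : t ∈ Δ := by
  obtain ⟨z, hz, hsub⟩ := ssubset_iff_exists_subset_erase.mp hts
  exact hΔ _ (hs z hz) t hsub

/-- Otherwise `insert y F` would be a minimal non-face of cardinality `d + 1`. -/
lemma exists_insert_erase_notMem (hΔ : IsComplex (↑Δ : Set (Finset (Fin n))))
    (hdim : ∀ F ∈ Δ, F.card ≤ d)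
    (hrt : ∀ G : Finset (Fin n), G ∉ Δ → (∀ G' ⊂ G, G' ∈ Δ) → G.card ≤ d)
    {F : Finset (Fin n)} (hF : F ∈ Δ) (hFd : F.card = d) {y : Fin n} (hy : y ∉ F) :
    ∃ v ∈ F, insert y (F.erase v) ∉ Δ := by
  by_contra! hall
  have hcard : (insert y F).card = d + 1 := by rw [card_insert_of_notMem hy, hFd]
  have herase : ∀ z ∈ insert y F, (insert y F).erase z ∈ Δ := by
    intro z hz
    rcases mem_insert.mp hz with rfl | hzF
    · rwa [erase_insert hy]
    · rw [erase_insert_of_ne (ne_of_mem_of_not_mem hzF hy).symm]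
      exact hall z hzF
  have hnotMem : insert y F ∉ Δ := fun h => by have := hdim _ h; omega
  have := hrt _ hnotMem fun G' hG' => hΔ.mem_of_ssubset herase hG'
  omega

end Complexes

/-- Let `Δ` be a simplicial complex of dimension `d - 1` (`d ≥ 2`) every minimal
non-face of which has cardinality at most `d` (relation type `≤ d`).  If the number of
`(d-1)`-dimensional facets of `Δ` is at most `2d - 1`, then the reduced homology
`H̃_{d-1}(Δ; k)` vanishes for any field `k`. -/
theorem key_vanishing (n d : ℕ) (k : Type) [Field k] (hd : 2 ≤ d)
    (Δ : Finset (Finset (Fin n))) (hΔ : IsComplex (↑Δ : Set (Finset (Fin n))))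
    (hdim : ∀ F ∈ Δ, F.card ≤ d)
    (hrt : ∀ G : Finset (Fin n), G ∉ Δ → (∀ G' ⊂ G, G' ∈ Δ) → G.card ≤ d)
    (hmult : (Δ.filter fun F => F.card = d).card ≤ 2 * d - 1) :
    HVanishes n k (↑Δ : Set (Finset (Fin n))) (d - 1) := by
  classical
  intro x hx
  obtain ⟨hxspan, hxcycle⟩ := Submodule.mem_inf.mp hx
  suffices x = 0 by simp [this]
  by_contra! hx0
  obtain ⟨F, hF⟩ := Function.ne_iff.mp hx0
  set Γ := univ.filter fun G => x G ≠ 0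
  have hΓ : ∀ G ∈ Γ, G ∈ Δ ∧ G.card = d := fun G hG => by
    have := support_subset_of_mem_spanFaces hxspan (mem_filter.mp hG).2
    simpa [Nat.sub_add_cancel (by omega : 1 ≤ d)] using this
  have hFΓ : F ∈ Γ := by simpa [Γ] using hF
  have hcount := two_mul_card_le_card
    (fun G hG v hv => by
      simpa [Γ] using exists_insert_erase_ne_zero_of_bdry_eq_zero hxcycle (mem_filter.mp hG).2 hv)
    (fun G hG y hy => by
      obtain ⟨v, hv, hvΔ⟩ := exists_insert_erase_notMem hΔ hdim hrt (hΓ G hG).1 (hΓ G hG).2 hy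
      exact ⟨v, hv, fun h => hvΔ (hΓ _ h).1⟩) hFΓ
  have hΓle : Γ.card ≤ 2 * d - 1 :=
    (card_le_card fun G hG => mem_filter.mpr (hΓ G hG)).trans hmult
  rw [(hΓ F hFΓ).2] at hcount
  omega
end

section
/- Let Δ be a pure (d-1)-dimensional simplicial complex on [n] with d ≥ 3 and n ≥ d+2, such that every (d-1)-element subset of [n] is a face (indeg = d), and suppose Δ is not a cone over any vertex. If every vertex-deleted subcomplex Δ_{[n]\{i}} has exactly one facet of dimension d-1, then the number e of facets of Δ satisfies both n(e-1) ≤ de and de ≥ binomial(n, d-1); these together force d ≤ 2, a contradiction. Hence there exists a vertex i with e(Δ_{[n]\{i}}) ≥ 2. -/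
private lemma choose_mono_half (n : ℕ) : ∀ b a, a ≤ b → b ≤ n / 2 →
    Nat.choose n a ≤ Nat.choose n b := by
  intro b
  induction b with
  | zero => intro a ha _; interval_cases a; rfl
  | succ b ih =>
    intro a ha hb
    rcases Nat.lt_or_ge a (b+1) with h | h
    · exact le_trans (ih a (by omega) (by omega))
        (Nat.choose_le_succ_of_lt_half_left (by omega))
    · have : a = b + 1 := by omega
      subst this; rfl

private lemma choose_two_le (n k : ℕ) (h2 : 2 ≤ k) (hk : k + 2 ≤ n) :
    Nat.choose n 2 ≤ Nat.choose n k := by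
  rcases le_or_gt k (n / 2) with h | h
  · exact choose_mono_half n k 2 h2 h
  · have hsym : Nat.choose n (n - k) = Nat.choose n k := Nat.choose_symm (by omega)
    rw [← hsym]
    exact choose_mono_half n (n - k) 2 (by omega) (by omega)

/-- Let `Δ` be a pure `(d-1)`-dimensional simplicial complex on `[n]` with `d ≥ 3` and
`n ≥ d + 2`, such that every `(d-1)`-element subset of `[n]` is a face, and `Δ` is not
a cone over any vertex.  Then there exists a vertex `i` such that the vertex-deleted
subcomplex `Δ_{[n] \ {i}}` has at least two facets of dimension `d-1`. -/
theorem exists_vertex_two_facets (n d : ℕ) (hd : 3 ≤ d) (hn : d + 2 ≤ n)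
    (Δ : Finset (Finset (Fin n))) (hΔ : IsComplexF Δ)
    (hdim : ∀ F ∈ Δ, F.card ≤ d)
    (hpure : ∀ F ∈ Δ, ∃ G ∈ Δ, F ⊆ G ∧ G.card = d)
    (hindeg : ∀ G : Finset (Fin n), G.card = d - 1 → G ∈ Δ)
    (hnotcone : ∀ v : Fin n, ∃ F ∈ Δ, insert v F ∉ Δ) :
    ∃ i : Fin n, 2 ≤ (Δ.filter fun F => F.card = d ∧ i ∉ F).card := by
  by_contra hcon
  push_neg at hcon
  set E : Finset (Finset (Fin n)) := Δ.filter (fun F => F.card = d) with hE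
  set e : ℕ := E.card with he
  -- every vertex-deleted count is at most 1
  have hle1 : ∀ i : Fin n, (E.filter fun F => i ∉ F).card ≤ 1 := by
    intro i
    have h := hcon i
    rw [hE, Finset.filter_filter]
    omega
  -- e ≥ 1
  have hepos : 1 ≤ e := by
    obtain ⟨G, -, hGcard⟩ := Finset.exists_subset_card_eq
      (show d - 1 ≤ (Finset.univ : Finset (Fin n)).card by simp; omega)
    obtain ⟨F, hF, -, hFcard⟩ := hpure G (hindeg G hGcard)
    have : F ∈ E := Finset.mem_filter.2 ⟨hF, hFcard⟩
    have := Finset.card_pos.2 ⟨F, this⟩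
    omega
  -- counting 1 : e * (n - d) ≤ n
  have hcount1 : e * (n - d) ≤ n := by
    have hsum : ∑ i : Fin n, (E.filter fun F => i ∉ F).card = e * (n - d) := by
      have : ∀ i : Fin n, (E.filter fun F => i ∉ F).card
          = ∑ F ∈ E, (if i ∉ F then 1 else 0) := by
        intro i; rw [Finset.card_filter]
      simp_rw [this]
      rw [Finset.sum_comm]
      have : ∀ F ∈ E, (∑ i : Fin n, if i ∉ F then 1 else 0) = n - d := by
        intro F hF
        have hFd : F.card = d := (Finset.mem_filter.1 hF).2
        have h1 : (∑ i : Fin n, if i ∉ F then 1 else 0)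
            = (Finset.univ.filter (fun i : Fin n => i ∉ F)).card :=
          (Finset.card_filter _ _).symm
        have h2 : Finset.univ.filter (fun i : Fin n => i ∉ F) = Fᶜ := by
          ext x; simp
        rw [h1, h2, Finset.card_compl, hFd]
        simp
      rw [Finset.sum_congr rfl this, Finset.sum_const, smul_eq_mul]
    calc e * (n - d) = ∑ i : Fin n, (E.filter fun F => i ∉ F).card := hsum.symm
      _ ≤ ∑ _i : Fin n, 1 := Finset.sum_le_sum (fun i _ => hle1 i)
      _ = n := by simp
  -- counting 2 : choose n (d-1) ≤ e * d
  have hcount2 : Nat.choose n (d - 1) ≤ e * d := by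
    have hsub : (Finset.univ : Finset (Fin n)).powersetCard (d - 1)
        ⊆ E.biUnion (fun F => F.powersetCard (d - 1)) := by
      intro G hG
      rw [Finset.mem_powersetCard] at hG
      obtain ⟨F, hF, hGF, hFcard⟩ := hpure G (hindeg G hG.2)
      exact Finset.mem_biUnion.2 ⟨F, Finset.mem_filter.2 ⟨hF, hFcard⟩,
        Finset.mem_powersetCard.2 ⟨hGF, hG.2⟩⟩
    have h1 : ((Finset.univ : Finset (Fin n)).powersetCard (d - 1)).card
        = Nat.choose n (d - 1) := by
      rw [Finset.card_powersetCard]; simp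
    have h2 : (E.biUnion (fun F => F.powersetCard (d - 1))).card ≤ e * d := by
      refine le_trans (Finset.card_biUnion_le) ?_
      have : ∀ F ∈ E, (F.powersetCard (d - 1)).card = d := by
        intro F hF
        rw [Finset.card_powersetCard, (Finset.mem_filter.1 hF).2]
        have h1 : d - (d - 1) = 1 := by omega
        have := Nat.choose_symm (show d - 1 ≤ d by omega)
        rw [h1] at this
        rw [← this, Nat.choose_one_right]
      rw [Finset.sum_congr rfl this, Finset.sum_const, smul_eq_mul]
    rw [← h1]
    exact le_trans (Finset.card_le_card hsub) h2
  -- choose n 2 ≤ choose n (d-1)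
  have h3 : Nat.choose n 2 ≤ Nat.choose n (d - 1) :=
    choose_two_le n (d - 1) (by omega) (by omega)
  -- 2 * choose n 2 = n * (n - 1)
  have h4 : 2 * Nat.choose n 2 = n * (n - 1) := by
    rw [Nat.choose_two_right]
    have hdvd : 2 ∣ n * (n - 1) := by
      rw [mul_comm]
      have h := Nat.even_mul_succ_self (n - 1)
      rw [show n - 1 + 1 = n by omega] at h
      exact h.two_dvd
    exact Nat.mul_div_cancel' hdvd
  -- combine
  have h5 : n * (n - 1) ≤ 2 * (e * d) := by
    calc n * (n - 1) = 2 * Nat.choose n 2 := h4.symm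
      _ ≤ 2 * Nat.choose n (d - 1) := by omega
      _ ≤ 2 * (e * d) := by omega
  have h6 : 2 * e ≤ n := by
    have : 2 * e ≤ e * (n - d) := by
      have : 2 ≤ n - d := by omega
      calc 2 * e = e * 2 := by ring
        _ ≤ e * (n - d) := Nat.mul_le_mul_left e this
    omega
  have h7 : 2 * (e * d) ≤ d * n := by
    calc 2 * (e * d) = d * (2 * e) := by ring
      _ ≤ d * n := Nat.mul_le_mul_left d h6
  have h8 : n * (n - 1) ≤ n * d := by
    calc n * (n - 1) ≤ d * n := le_trans h5 h7
      _ = n * d := by ring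
  have h9 : n - 1 ≤ d := Nat.le_of_mul_le_mul_left h8 (by omega)
  omega
end

section
/- Suppose there exists a pure (d-1)-dimensional simplicial complex Δ on [d+2] vertices with every (d-1)-subset a face and with e facets where e ≤ 2d - 1. Then 2d - 1 ≥ e ≥ floor((d+1)²/4); in particular d ≤ 5. -/
section MantelAux
open Finset

/-- Mantel's theorem for a triangle-free family of 2-subsets. -/
lemma mantel_aux {α : Type*} [DecidableEq α] :
    ∀ n (V : Finset α) (P : Finset (Finset α)), V.card ≤ n →
    (∀ p ∈ P, p.card = 2 ∧ p ⊆ V) →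
    (∀ a b c : α, ({a, b} : Finset α) ∈ P → ({b, c} : Finset α) ∈ P →
      ({a, c} : Finset α) ∈ P → False) →
    P.card ≤ V.card ^ 2 / 4 := by
  intro n
  induction n with
  | zero =>
    intro V P hV hP _
    rcases P.eq_empty_or_nonempty with rfl | ⟨p, hp⟩
    · simp
    · have h1 := (hP p hp).1
      have h2 := card_le_card (hP p hp).2
      omega
  | succ n ih =>
    intro V P hV hP htf
    rcases P.eq_empty_or_nonempty with rfl | ⟨p, hp⟩
    · simp
    obtain ⟨a, b, hab, rfl⟩ := card_eq_two.mp (hP p hp).1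
    have haV : a ∈ V := (hP _ hp).2 (by simp)
    have hbV : b ∈ V := (hP _ hp).2 (by simp)
    set N : α → Finset α := fun v => V.filter (fun x => ({v, x} : Finset α) ∈ P) with hN
    have hdeg : ∀ v, P.filter (fun q => v ∈ q) ⊆ (N v).image (fun x => ({v, x} : Finset α)) := by
      intro v q hq
      simp only [mem_filter] at hq
      obtain ⟨hqP, hvq⟩ := hq
      obtain ⟨u, w, huw, h2⟩ := card_eq_two.mp (hP q hqP).1
      subst h2
      rcases mem_insert.mp hvq with rfl | hvw
      · refine mem_image.mpr ⟨w, ?_, rfl⟩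
        simp only [hN, mem_filter]
        exact ⟨(hP _ hqP).2 (by simp), hqP⟩
      · have hvweq : v = w := by simpa using hvw
        subst hvweq
        refine mem_image.mpr ⟨u, ?_, ?_⟩
        · simp only [hN, mem_filter]
          exact ⟨(hP _ hqP).2 (by simp), by rwa [pair_comm]⟩
        · rw [pair_comm]
    have hNdisj : Disjoint (N a) (N b) := by
      rw [disjoint_left]
      intro x hxa hxb
      simp only [hN, mem_filter] at hxa hxb
      exact htf a x b hxa.2 (by rw [pair_comm]; exact hxb.2) hp
    have hNcard : (N a).card + (N b).card ≤ V.card := by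
      rw [← card_union_of_disjoint hNdisj]
      exact card_le_card (union_subset (filter_subset _ _) (filter_subset _ _))
    set P1 := P.filter (fun q => a ∈ q ∨ b ∈ q) with hP1def
    set P2 := P.filter (fun q => ¬(a ∈ q ∨ b ∈ q)) with hP2def
    have hsplit : P1.card + P2.card = P.card :=
      card_filter_add_card_filter_not _
    have hP1card : P1.card + 1 ≤ V.card := by
      have h1 : P1 = P.filter (fun q => a ∈ q) ∪ P.filter (fun q => b ∈ q) := filter_or _ _ _
      have h2 : ({a, b} : Finset α) ∈ P.filter (fun q => a ∈ q) ∩ P.filter (fun q => b ∈ q) := by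
        simp [hp]
      have h3 := card_union_add_card_inter (P.filter (fun q => a ∈ q)) (P.filter (fun q => b ∈ q))
      have h4 : (P.filter (fun q => a ∈ q)).card ≤ (N a).card :=
        le_trans (card_le_card (hdeg a)) card_image_le
      have h5 : (P.filter (fun q => b ∈ q)).card ≤ (N b).card :=
        le_trans (card_le_card (hdeg b)) card_image_le
      have h6 : 1 ≤ (P.filter (fun q => a ∈ q) ∩ P.filter (fun q => b ∈ q)).card :=
        card_pos.mpr ⟨_, h2⟩
      rw [h1]
      omega
    have habV : ({a, b} : Finset α) ⊆ V := by
      intro x hx; rcases mem_insert.mp hx with rfl | hx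
      · exact haV
      · simp only [mem_singleton] at hx; subst hx; exact hbV
    have hVsd : (V \ {a, b}).card = V.card - 2 := by
      rw [card_sdiff_of_subset habV, card_pair hab]
    have hV2 : 2 ≤ V.card := by
      have := card_le_card habV; rwa [card_pair hab] at this
    have hP2card : P2.card ≤ (V \ {a, b}).card ^ 2 / 4 := by
      refine ih (V \ {a, b}) P2 (by omega) ?_ ?_
      · intro q hq
        simp only [hP2def, mem_filter] at hq
        push_neg at hq
        refine ⟨(hP q hq.1).1, subset_sdiff.mpr ⟨(hP q hq.1).2, ?_⟩⟩
        rw [disjoint_right]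
        intro x hx
        rcases mem_insert.mp hx with rfl | hx
        · exact hq.2.1
        · simp only [mem_singleton] at hx; subst hx; exact hq.2.2
      · intro x y z h1 h2 h3
        exact htf x y z (mem_of_mem_filter _ h1) (mem_of_mem_filter _ h2)
          (mem_of_mem_filter _ h3)
    rw [hVsd] at hP2card
    have harith : (V.card - 1) + (V.card - 2) ^ 2 / 4 ≤ V.card ^ 2 / 4 := by
      obtain ⟨k, hk⟩ : ∃ k, V.card = k + 2 := ⟨V.card - 2, by omega⟩
      rw [hk]
      have e1 : (k + 2) ^ 2 = k ^ 2 + 4 * (k + 1) := by ring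
      rw [e1, Nat.add_mul_div_left _ _ (by norm_num : 0 < 4)]
      simp
      omega
    omega

lemma arith_choose (d : ℕ) : (d + 1) ^ 2 / 4 + (d + 2) ^ 2 / 4 = (d + 2).choose 2 := by
  have h4 : ∀ m : ℕ, (4 * m + 1) / 4 = m := fun m => by omega
  have h4' : ∀ m : ℕ, (4 * m) / 4 = m := fun m => by omega
  have h2 : ∀ m : ℕ, (2 * m) / 2 = m := fun m => by omega
  rw [Nat.choose_two_right]
  rcases Nat.even_or_odd d with ⟨k, rfl⟩ | ⟨k, rfl⟩
  · rw [show (k + k + 1) ^ 2 = 4 * (k * k + k) + 1 by ring, h4,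
      show (k + k + 2) ^ 2 = 4 * ((k + 1) * (k + 1)) by ring, h4',
      show k + k + 2 - 1 = k + k + 1 by omega,
      show (k + k + 2) * (k + k + 1) = 2 * (2 * (k * k) + 3 * k + 1) by ring, h2]
    ring
  · rw [show (2 * k + 1 + 1) ^ 2 = 4 * ((k + 1) * (k + 1)) by ring, h4',
      show (2 * k + 1 + 2) ^ 2 = 4 * (k * k + 3 * k + 2) + 1 by ring, h4,
      show 2 * k + 1 + 2 - 1 = 2 * k + 2 by omega,
      show (2 * k + 1 + 2) * (2 * k + 2) = 2 * (2 * (k * k) + 5 * k + 3) by ring,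
      h2]
    ring


end MantelAux

/-- Suppose there exists a pure `(d-1)`-dimensional simplicial complex `Δ` on `d + 2`
vertices with every `(d-1)`-subset a face and with `e` facets, where `e ≤ 2d - 1`.
Then `2d - 1 ≥ e ≥ ⌊(d+1)² / 4⌋`; in particular `d ≤ 5`. -/
theorem pure_small_multiplicity (d : ℕ) (hd : 2 ≤ d)
    (Δ : Finset (Finset (Fin (d + 2)))) (hΔ : IsComplexF Δ)
    (hdim : ∀ F ∈ Δ, F.card ≤ d)
    (hpure : ∀ F ∈ Δ, ∃ G ∈ Δ, F ⊆ G ∧ G.card = d)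
    (hindeg : ∀ G : Finset (Fin (d + 2)), G.card = d - 1 → G ∈ Δ)
    (he : (Δ.filter fun F => F.card = d).card ≤ 2 * d - 1) :
    (d + 1) ^ 2 / 4 ≤ (Δ.filter fun F => F.card = d).card ∧
      (Δ.filter fun F => F.card = d).card ≤ 2 * d - 1 ∧ d ≤ 5 := by
  set facets := Δ.filter fun F => F.card = d with hfacets
  set PC := (Finset.univ : Finset (Fin (d + 2))).powersetCard 2 with hPC
  set E := PC.filter (fun p => pᶜ ∉ Δ) with hE
  set E' := PC.filter (fun p => ¬ pᶜ ∉ Δ) with hE'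
  have hcardFin : Fintype.card (Fin (d + 2)) = d + 2 := Fintype.card_fin _
  have hmemPC : ∀ p : Finset (Fin (d + 2)), p ∈ PC ↔ p.card = 2 := by
    intro p; simp [hPC, Finset.mem_powersetCard_univ]
  -- E' is the image of facets under complement
  have hE'img : E' = facets.image compl := by
    ext p
    simp only [hE', Finset.mem_filter, not_not, Finset.mem_image, hfacets, hmemPC]
    constructor
    · rintro ⟨h2, hpc⟩
      refine ⟨pᶜ, ⟨hpc, ?_⟩, compl_compl p⟩
      rw [Finset.card_compl, hcardFin, h2]
      omega
    · rintro ⟨F, hF, rfl⟩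
      obtain ⟨hFΔ, hFd⟩ := hF
      constructor
      · rw [Finset.card_compl, hcardFin, hFd]; omega
      · rwa [compl_compl]
  have hE'card : E'.card = facets.card := by
    rw [hE'img]
    exact Finset.card_image_of_injective _ compl_injective
  have hEE' : E.card + E'.card = (d + 2).choose 2 := by
    rw [hE, hE', Finset.card_filter_add_card_filter_not, hPC,
      Finset.card_powersetCard, Finset.card_univ, hcardFin]
  -- triangle-freeness of E
  have htf : ∀ a b c : Fin (d + 2), ({a, b} : Finset (Fin (d + 2))) ∈ E →
      ({b, c} : Finset (Fin (d + 2))) ∈ E → ({a, c} : Finset (Fin (d + 2))) ∈ E → False := by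
    intro a b c hab hbc hac
    obtain ⟨hab2, habn⟩ := Finset.mem_filter.mp hab
    obtain ⟨hbc2, hbcn⟩ := Finset.mem_filter.mp hbc
    obtain ⟨hac2, hacn⟩ := Finset.mem_filter.mp hac
    rw [hmemPC] at hab2 hbc2 hac2
    have hne_ab : a ≠ b := by intro h; subst h; simp at hab2
    have hne_bc : b ≠ c := by intro h; subst h; simp at hbc2
    have hne_ac : a ≠ c := by intro h; subst h; simp at hac2
    set T : Finset (Fin (d + 2)) := {a, b, c} with hT
    have hTcard : T.card = 3 := by
      rw [hT, Finset.card_insert_of_notMem (by simp [hne_ab, hne_ac]),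
        Finset.card_insert_of_notMem (by simp [hne_bc]), Finset.card_singleton]
    have hGcard : (Tᶜ).card = d - 1 := by
      rw [Finset.card_compl, hcardFin, hTcard]; omega
    obtain ⟨F, hFΔ, hGF, hFd⟩ := hpure _ (hindeg _ hGcard)
    have hFcT : Fᶜ ⊆ T := by
      have := Finset.compl_subset_compl.mpr hGF
      rwa [compl_compl] at this
    have hFc2 : (Fᶜ).card = 2 := by
      rw [Finset.card_compl, hcardFin, hFd]; omega
    -- one of a, b, c is missing from Fᶜ
    have hmiss : a ∉ Fᶜ ∨ b ∉ Fᶜ ∨ c ∉ Fᶜ := by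
      by_contra h
      push_neg at h
      have : T ⊆ Fᶜ := by
        intro x hx
        rcases Finset.mem_insert.mp hx with rfl | hx
        · exact h.1
        rcases Finset.mem_insert.mp hx with rfl | hx
        · exact h.2.1
        · simp only [Finset.mem_singleton] at hx; subst hx; exact h.2.2
      have := Finset.card_le_card this
      omega
    have key : ∀ x y : Fin (d + 2), Fᶜ = {x, y} →
        ({x, y} : Finset (Fin (d + 2)))ᶜ ∉ Δ → False := by
      intro x y hxy hnot
      apply hnot
      rw [← hxy, compl_compl]
      exact hFΔ
    rcases hmiss with hm | hm | hm
    · have hsub : Fᶜ ⊆ {b, c} := by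
        intro x hx
        have hxT := hFcT hx
        rw [hT] at hxT
        rcases Finset.mem_insert.mp hxT with rfl | hxT
        · exact absurd hx hm
        · exact hxT
      have : Fᶜ = {b, c} := Finset.eq_of_subset_of_card_le hsub
        (by rw [hFc2]; exact Finset.card_insert_le _ _ |>.trans (by simp))
      exact key b c this hbcn
    · have hsub : Fᶜ ⊆ {a, c} := by
        intro x hx
        have hxT := hFcT hx
        rw [hT] at hxT
        rcases Finset.mem_insert.mp hxT with rfl | hxT
        · exact Finset.mem_insert_self _ _
        rcases Finset.mem_insert.mp hxT with rfl | hxT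
        · exact absurd hx hm
        · exact Finset.mem_insert_of_mem hxT
      have : Fᶜ = {a, c} := Finset.eq_of_subset_of_card_le hsub
        (by rw [hFc2]; exact Finset.card_insert_le _ _ |>.trans (by simp))
      exact key a c this hacn
    · have hsub : Fᶜ ⊆ {a, b} := by
        intro x hx
        have hxT := hFcT hx
        rw [hT] at hxT
        rcases Finset.mem_insert.mp hxT with rfl | hxT
        · exact Finset.mem_insert_self _ _
        rcases Finset.mem_insert.mp hxT with rfl | hxT
        · exact Finset.mem_insert_of_mem (Finset.mem_singleton_self _)
        · simp only [Finset.mem_singleton] at hxT; subst hxT; exact absurd hx hm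
      have : Fᶜ = {a, b} := Finset.eq_of_subset_of_card_le hsub
        (by rw [hFc2]; exact Finset.card_insert_le _ _ |>.trans (by simp))
      exact key a b this habn
  -- apply Mantel
  have hmantel : E.card ≤ (d + 2) ^ 2 / 4 := by
    have := mantel_aux (d + 2) (Finset.univ : Finset (Fin (d + 2))) E
      (by rw [Finset.card_univ, hcardFin]) ?_ htf
    · rwa [Finset.card_univ, hcardFin] at this
    · intro p hp
      exact ⟨(hmemPC p).mp (Finset.mem_filter.mp hp).1, Finset.subset_univ p⟩
  have hlow : (d + 1) ^ 2 / 4 ≤ facets.card := by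
    have := arith_choose d
    omega
  refine ⟨hlow, he, ?_⟩
  by_contra hd6
  push_neg at hd6
  have h8 : 2 * d ≤ (d + 1) ^ 2 / 4 := by
    rw [Nat.le_div_iff_mul_le (by norm_num)]
    nlinarith
  omega
end
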